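/- arXiv:1507.03130 — 4 statements merged into one kernel-verified Lean document; each statement's English description precedes it below -/
import Mathlib

section
/- Let X be a bounded convex subset of ℝ^p with 0 in its interior. If v ∈ ℝ^p is nonzero, d₀ > 0, and d = d₀ · v / (a(v,X) · √(1 + ‖v‖²)), then d₀ + xᵀd > 0 for every x ∈ X. -/
open scoped RealInnerProductSpace

noncomputable def aFun {p : ℕ} (b : EuclideanSpace ℝ (Fin p))
    (X : Set (EuclideanSpace ℝ (Fin p))) : ℝ :=
  sSup ((fun x => -⟪x, b⟫ / ‖b‖) '' X)

theorem stmt1 {p : ℕ} (X : Set (EuclideanSpace ℝ (Fin p)))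
    (hXb : Bornology.IsBounded X) (hXc : Convex ℝ X)
    (hX0 : (0 : EuclideanSpace ℝ (Fin p)) ∈ interior X)
    (v : EuclideanSpace ℝ (Fin p)) (hv : v ≠ 0)
    (d₀ : ℝ) (hd₀ : 0 < d₀)
    (d : EuclideanSpace ℝ (Fin p))
    (hd : d = (d₀ / (aFun v X * Real.sqrt (1 + ‖v‖ ^ 2))) • v) :
    ∀ x ∈ X, 0 < d₀ + ⟪x, d⟫ := by
  intro x hx
  have hvn : (0:ℝ) < ‖v‖ := norm_pos_iff.mpr hv
  obtain ⟨C, hC⟩ := hXb.exists_norm_le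
  have hbdd : BddAbove ((fun x => -⟪x, v⟫ / ‖v‖) '' X) := by
    refine ⟨C, ?_⟩
    rintro y ⟨z, hz, rfl⟩
    have h1 : |⟪z, v⟫| ≤ ‖z‖ * ‖v‖ := abs_real_inner_le_norm z v
    have h2 : ‖z‖ ≤ C := hC z hz
    have h3 : -⟪z, v⟫ ≤ C * ‖v‖ := by nlinarith [neg_abs_le ⟪z, v⟫]
    exact (div_le_iff₀ hvn).mpr h3
  obtain ⟨ε, hε, hball⟩ := Metric.mem_nhds_iff.mp (mem_interior_iff_mem_nhds.mp hX0)
  set x₀ : EuclideanSpace ℝ (Fin p) := (-(ε/2)/‖v‖) • v with hx₀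
  have hx₀X : x₀ ∈ X := by
    apply hball
    simp only [Metric.mem_ball, dist_zero_right, hx₀, norm_smul, Real.norm_eq_abs]
    rw [abs_div, abs_neg, abs_of_pos (by linarith), abs_of_pos hvn]
    rw [div_mul_cancel₀ _ hvn.ne']
    linarith
  have ha_pos : (0:ℝ) < aFun v X := by
    have hmem : -⟪x₀, v⟫ / ‖v‖ ∈ (fun x => -⟪x, v⟫ / ‖v‖) '' X := ⟨x₀, hx₀X, rfl⟩
    have hle := le_csSup hbdd hmem
    have hval : -⟪x₀, v⟫ / ‖v‖ = ε/2 := by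
      rw [hx₀, real_inner_smul_left, real_inner_self_eq_norm_sq]
      field_simp
    rw [hval] at hle
    have : (0:ℝ) < ε/2 := by linarith
    exact lt_of_lt_of_le this hle
  have hxa : -⟪x, v⟫ / ‖v‖ ≤ aFun v X := le_csSup hbdd ⟨x, hx, rfl⟩
  have hxv : -(aFun v X) * ‖v‖ ≤ ⟪x, v⟫ := by
    have := (div_le_iff₀ hvn).mp hxa
    linarith
  set s := Real.sqrt (1 + ‖v‖ ^ 2) with hs
  have hvs : ‖v‖ < s := by
    rw [hs]
    rw [show ‖v‖ = Real.sqrt (‖v‖^2) by rw [Real.sqrt_sq (norm_nonneg v)]]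
    apply Real.sqrt_lt_sqrt (by positivity)
    nlinarith [Real.sq_sqrt (show (0:ℝ) ≤ ‖v‖^2 by positivity), Real.sqrt_nonneg (‖v‖^2)]
  have hspos : (0:ℝ) < s := lt_of_le_of_lt (norm_nonneg v) hvs
  set c := d₀ / (aFun v X * s) with hc
  have hcpos : 0 < c := by
    apply div_pos hd₀ (mul_pos ha_pos hspos)
  have hcd : c * (aFun v X * s) = d₀ := by
    rw [hc]; field_simp
  have hinner : ⟪x, d⟫ = c * ⟪x, v⟫ := by
    rw [hd, real_inner_smul_right]
  rw [hinner]
  nlinarith [mul_le_mul_of_nonneg_left hxv (le_of_lt hcpos),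
    mul_pos (mul_pos hcpos ha_pos) (sub_pos.mpr hvs)]
end

section
/- Let (Q₁, q₁, F₁, f₁) and (Q₂, q₂, F₂, f₂) be two probability function quartets, fix τ₀ ∈ (0,1), and let m_j = Q_j(τ₀). If there exist constants 0 < c₁ ≤ 1 ≤ c₂ < ∞ with c₁ q₂(t) ≤ q₁(t) ≤ c₂ q₂(t) for all t ∈ (0,1), then for every y in the support of f₂, f₂(y) = f₁(y + Δ₁(y)) · Δ₂(y), where Δ₁(y) := Q₁(F₂(y)) − y satisfies |Δ₁(y)| ≤ max(1−c₁, c₂−1)·|y − m₂| + |m₁ − m₂|, and Δ₂(y) := q₁(F₂(y))/q₂(F₂(y)) ∈ [c₁, c₂]. -/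
open Set

theorem stmt8 (Q₁ q₁ F₁ f₁ Q₂ q₂ F₂ f₂ : ℝ → ℝ)
    (hQ₁ : ∀ t ∈ Ioo (0:ℝ) 1, HasDerivAt Q₁ (q₁ t) t ∧ 0 < q₁ t)
    (hF₁ : ∀ t ∈ Ioo (0:ℝ) 1, F₁ (Q₁ t) = t)
    (hF₁' : ∀ y ∈ Q₁ '' Ioo (0:ℝ) 1, F₁ y ∈ Ioo (0:ℝ) 1 ∧ Q₁ (F₁ y) = y)
    (hf₁ : ∀ y ∈ Q₁ '' Ioo (0:ℝ) 1, f₁ y = 1 / q₁ (F₁ y))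
    (hQ₂ : ∀ t ∈ Ioo (0:ℝ) 1, HasDerivAt Q₂ (q₂ t) t ∧ 0 < q₂ t)
    (hF₂ : ∀ t ∈ Ioo (0:ℝ) 1, F₂ (Q₂ t) = t)
    (hF₂' : ∀ y ∈ Q₂ '' Ioo (0:ℝ) 1, F₂ y ∈ Ioo (0:ℝ) 1 ∧ Q₂ (F₂ y) = y)
    (hf₂ : ∀ y ∈ Q₂ '' Ioo (0:ℝ) 1, f₂ y = 1 / q₂ (F₂ y))
    (τ₀ : ℝ) (hτ₀ : τ₀ ∈ Ioo (0:ℝ) 1)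
    (m₁ m₂ : ℝ) (hm₁ : m₁ = Q₁ τ₀) (hm₂ : m₂ = Q₂ τ₀)
    (c₁ c₂ : ℝ) (hc₁ : 0 < c₁) (hc₁1 : c₁ ≤ 1) (hc₂1 : 1 ≤ c₂)
    (hq : ∀ t ∈ Ioo (0:ℝ) 1, c₁ * q₂ t ≤ q₁ t ∧ q₁ t ≤ c₂ * q₂ t) :
    ∀ y ∈ Q₂ '' Ioo (0:ℝ) 1,
      f₂ y = f₁ (y + (Q₁ (F₂ y) - y)) * (q₁ (F₂ y) / q₂ (F₂ y)) ∧
      |Q₁ (F₂ y) - y| ≤ max (1 - c₁) (c₂ - 1) * |y - m₂| + |m₁ - m₂| ∧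
      q₁ (F₂ y) / q₂ (F₂ y) ∈ Icc c₁ c₂ := by
  intro y hy
  obtain ⟨t, ht, rfl⟩ := hy
  set M := max (1 - c₁) (c₂ - 1) with hM
  have hMnn : 0 ≤ M := le_trans (by linarith) (le_max_right _ _)
  have hM1 : 1 - c₁ ≤ M := le_max_left _ _
  have hM2 : c₂ - 1 ≤ M := le_max_right _ _
  have hq2pos := (hQ₂ t ht).2
  have hq1pos := (hQ₁ t ht).2
  have hF2t : F₂ (Q₂ t) = t := hF₂ t ht
  have hr1 : c₁ ≤ q₁ t / q₂ t := (le_div_iff₀ hq2pos).2 (by linarith [(hq t ht).1])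
  have hr2 : q₁ t / q₂ t ≤ c₂ := (div_le_iff₀ hq2pos).2 ((hq t ht).2)
  refine ⟨?_, ?_, ?_⟩
  · have h2 : f₂ (Q₂ t) = 1 / q₂ t := by rw [hf₂ _ ⟨t, ht, rfl⟩, hF2t]
    have h1 : f₁ (Q₁ t) = 1 / q₁ t := by
      rw [hf₁ (Q₁ t) ⟨t, ht, rfl⟩, hF₁ t ht]
    rw [hF2t]
    have he : Q₂ t + (Q₁ t - Q₂ t) = Q₁ t := by ring
    rw [he, h1, h2]
    field_simp
  · rw [hF2t, hm₁, hm₂]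
    have mono : ∀ (h h' : ℝ → ℝ), (∀ x ∈ Ioo (0:ℝ) 1, HasDerivAt h (h' x) x ∧ 0 ≤ h' x) →
        MonotoneOn h (Ioo (0:ℝ) 1) := by
      intro h h' hh
      apply monotoneOn_of_deriv_nonneg (convex_Ioo 0 1)
      · exact fun x hx => (hh x hx).1.continuousAt.continuousWithinAt
      · intro x hx
        rw [interior_Ioo] at hx
        exact (hh x hx).1.differentiableAt.differentiableWithinAt
      · intro x hx
        rw [interior_Ioo] at hx
        rw [(hh x hx).1.deriv]
        exact (hh x hx).2
    have monoQ2 : MonotoneOn Q₂ (Ioo (0:ℝ) 1) :=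
      mono Q₂ q₂ (fun x hx => ⟨(hQ₂ x hx).1, (hQ₂ x hx).2.le⟩)
    have mono1 : MonotoneOn (fun x => M * Q₂ x - (Q₁ x - Q₂ x)) (Ioo (0:ℝ) 1) := by
      apply mono _ (fun x => M * q₂ x - (q₁ x - q₂ x))
      intro x hx
      refine ⟨(((hQ₂ x hx).1.const_mul M).sub ((hQ₁ x hx).1.sub (hQ₂ x hx).1)), ?_⟩
      nlinarith [(hq x hx).2, (hQ₂ x hx).2, mul_le_mul_of_nonneg_right hM2 (hQ₂ x hx).2.le]
    have mono2 : MonotoneOn (fun x => M * Q₂ x + (Q₁ x - Q₂ x)) (Ioo (0:ℝ) 1) := by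
      apply mono _ (fun x => M * q₂ x + (q₁ x - q₂ x))
      intro x hx
      refine ⟨(((hQ₂ x hx).1.const_mul M).add ((hQ₁ x hx).1.sub (hQ₂ x hx).1)), ?_⟩
      nlinarith [(hq x hx).1, (hQ₂ x hx).2, mul_le_mul_of_nonneg_right hM1 (hQ₂ x hx).2.le]
    have hD : |(Q₁ t - Q₂ t) - (Q₁ τ₀ - Q₂ τ₀)| ≤ M * |Q₂ t - Q₂ τ₀| := by
      rcases le_total τ₀ t with hle | hle
      · have e1 := mono1 hτ₀ ht hle
        have e2 := mono2 hτ₀ ht hle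
        have e3 := monoQ2 hτ₀ ht hle
        dsimp only at e1 e2
        rw [abs_of_nonneg (show (0:ℝ) ≤ Q₂ t - Q₂ τ₀ by linarith), abs_le]
        constructor <;> linarith
      · have e1 := mono1 ht hτ₀ hle
        have e2 := mono2 ht hτ₀ hle
        have e3 := monoQ2 ht hτ₀ hle
        dsimp only at e1 e2
        rw [abs_of_nonpos (show Q₂ t - Q₂ τ₀ ≤ 0 by linarith), abs_le]
        constructor <;> linarith
    calc |Q₁ t - Q₂ t|
        = |((Q₁ t - Q₂ t) - (Q₁ τ₀ - Q₂ τ₀)) + (Q₁ τ₀ - Q₂ τ₀)| := by ring_nf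
      _ ≤ |(Q₁ t - Q₂ t) - (Q₁ τ₀ - Q₂ τ₀)| + |Q₁ τ₀ - Q₂ τ₀| := abs_add_le _ _
      _ ≤ M * |Q₂ t - Q₂ τ₀| + |Q₁ τ₀ - Q₂ τ₀| := by linarith
  · rw [hF2t]; exact ⟨hr1, hr2⟩
end

section
/- With notation as in the previous quartet lemma: if c₁ q₂(t) ≤ q₁(t) ≤ c₂ q₂(t) for all t ∈ (0,1) with 0 < c₁ ≤ 1 ≤ c₂ < ∞, then for all y in the support of f₂, c₁ y + (m₁ − c₁ m₂) ≤ Q₁(F₂(y)) ≤ c₂ y + (m₁ − c₂ m₂) whenever y ≥ m₂, and the reversed bounds hold for y ≤ m₂; in particular |Q₁(F₂(y)) − y| ≤ max(1−c₁, c₂−1)|y − m₂| + |m₁ − m₂|. -/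
open Set

theorem stmt9 (Q₁ q₁ F₁ f₁ Q₂ q₂ F₂ f₂ : ℝ → ℝ)
    (hQ₁ : ∀ t ∈ Ioo (0:ℝ) 1, HasDerivAt Q₁ (q₁ t) t ∧ 0 < q₁ t)
    (hF₁ : ∀ t ∈ Ioo (0:ℝ) 1, F₁ (Q₁ t) = t)
    (hF₁' : ∀ y ∈ Q₁ '' Ioo (0:ℝ) 1, F₁ y ∈ Ioo (0:ℝ) 1 ∧ Q₁ (F₁ y) = y)
    (hQ₂ : ∀ t ∈ Ioo (0:ℝ) 1, HasDerivAt Q₂ (q₂ t) t ∧ 0 < q₂ t)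
    (hF₂ : ∀ t ∈ Ioo (0:ℝ) 1, F₂ (Q₂ t) = t)
    (hF₂' : ∀ y ∈ Q₂ '' Ioo (0:ℝ) 1, F₂ y ∈ Ioo (0:ℝ) 1 ∧ Q₂ (F₂ y) = y)
    (τ₀ : ℝ) (hτ₀ : τ₀ ∈ Ioo (0:ℝ) 1)
    (m₁ m₂ : ℝ) (hm₁ : m₁ = Q₁ τ₀) (hm₂ : m₂ = Q₂ τ₀)
    (c₁ c₂ : ℝ) (hc₁ : 0 < c₁) (hc₁1 : c₁ ≤ 1) (hc₂1 : 1 ≤ c₂)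
    (hq : ∀ t ∈ Ioo (0:ℝ) 1, c₁ * q₂ t ≤ q₁ t ∧ q₁ t ≤ c₂ * q₂ t) :
    ∀ y ∈ Q₂ '' Ioo (0:ℝ) 1,
      (m₂ ≤ y → c₁ * y + (m₁ - c₁ * m₂) ≤ Q₁ (F₂ y) ∧
        Q₁ (F₂ y) ≤ c₂ * y + (m₁ - c₂ * m₂)) ∧
      (y ≤ m₂ → c₂ * y + (m₁ - c₂ * m₂) ≤ Q₁ (F₂ y) ∧
        Q₁ (F₂ y) ≤ c₁ * y + (m₁ - c₁ * m₂)) ∧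
      |Q₁ (F₂ y) - y| ≤ max (1 - c₁) (c₂ - 1) * |y - m₂| + |m₁ - m₂| := by

  have hIoo : interior (Ioo (0:ℝ) 1) = Ioo (0:ℝ) 1 := interior_Ioo
  have hd1 : ∀ s ∈ Ioo (0:ℝ) 1, HasDerivAt (fun s => Q₁ s - c₁ * Q₂ s) (q₁ s - c₁ * q₂ s) s :=
    fun s hs => (hQ₁ s hs).1.sub ((hQ₂ s hs).1.const_mul c₁)
  have hd2 : ∀ s ∈ Ioo (0:ℝ) 1, HasDerivAt (fun s => c₂ * Q₂ s - Q₁ s) (c₂ * q₂ s - q₁ s) s :=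
    fun s hs => ((hQ₂ s hs).1.const_mul c₂).sub (hQ₁ s hs).1
  have hmono1 : MonotoneOn (fun s => Q₁ s - c₁ * Q₂ s) (Ioo (0:ℝ) 1) := by
    apply monotoneOn_of_deriv_nonneg (convex_Ioo 0 1)
    · exact fun s hs => ((hd1 s hs).differentiableAt.continuousAt).continuousWithinAt
    · rw [hIoo]; exact fun s hs => (hd1 s hs).differentiableAt.differentiableWithinAt
    · rw [hIoo]; intro s hs
      rw [(hd1 s hs).deriv]
      linarith [(hq s hs).1]
  have hmono2 : MonotoneOn (fun s => c₂ * Q₂ s - Q₁ s) (Ioo (0:ℝ) 1) := by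
    apply monotoneOn_of_deriv_nonneg (convex_Ioo 0 1)
    · exact fun s hs => ((hd2 s hs).differentiableAt.continuousAt).continuousWithinAt
    · rw [hIoo]; exact fun s hs => (hd2 s hs).differentiableAt.differentiableWithinAt
    · rw [hIoo]; intro s hs
      rw [(hd2 s hs).deriv]
      linarith [(hq s hs).2]
  have hQ2mono : StrictMonoOn Q₂ (Ioo (0:ℝ) 1) := by
    apply strictMonoOn_of_deriv_pos (convex_Ioo 0 1)
    · exact fun s hs => (hQ₂ s hs).1.differentiableAt.continuousAt.continuousWithinAt
    · rw [hIoo]; intro s hs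
      rw [(hQ₂ s hs).1.deriv]
      exact (hQ₂ s hs).2
  rintro y ⟨t, ht, rfl⟩
  rw [hF₂ t ht]
  subst hm₁ hm₂
  have key1 : τ₀ ≤ t → Q₁ τ₀ + c₁ * (Q₂ t - Q₂ τ₀) ≤ Q₁ t ∧ Q₁ t ≤ Q₁ τ₀ + c₂ * (Q₂ t - Q₂ τ₀) := by
    intro h
    have h1 := hmono1 hτ₀ ht h
    have h2 := hmono2 hτ₀ ht h
    simp only at h1 h2
    constructor <;> nlinarith
  have key2 : t ≤ τ₀ → Q₁ τ₀ + c₂ * (Q₂ t - Q₂ τ₀) ≤ Q₁ t ∧ Q₁ t ≤ Q₁ τ₀ + c₁ * (Q₂ t - Q₂ τ₀) := by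
    intro h
    have h1 := hmono1 ht hτ₀ h
    have h2 := hmono2 ht hτ₀ h
    simp only at h1 h2
    constructor <;> nlinarith
  have hle : (hQ2mono.le_iff_le hτ₀ ht) = (hQ2mono.le_iff_le hτ₀ ht) := rfl
  have hM1 : 1 - c₁ ≤ max (1 - c₁) (c₂ - 1) := le_max_left _ _
  have hM2 : c₂ - 1 ≤ max (1 - c₁) (c₂ - 1) := le_max_right _ _
  have habs : Q₁ τ₀ - Q₂ τ₀ ≤ |Q₁ τ₀ - Q₂ τ₀| := le_abs_self _
  have habs' : -(Q₁ τ₀ - Q₂ τ₀) ≤ |Q₁ τ₀ - Q₂ τ₀| := neg_le_abs _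
  refine ⟨fun hy => ?_, fun hy => ?_, ?_⟩
  · have hτt : τ₀ ≤ t := (hQ2mono.le_iff_le hτ₀ ht).mp hy
    obtain ⟨k1, k2⟩ := key1 hτt
    exact ⟨by linarith, by linarith⟩
  · have hτt : t ≤ τ₀ := (hQ2mono.le_iff_le ht hτ₀).mp hy
    obtain ⟨k1, k2⟩ := key2 hτt
    exact ⟨by linarith, by linarith⟩
  · rcases le_total (Q₂ τ₀) (Q₂ t) with hy | hy
    · have hτt : τ₀ ≤ t := (hQ2mono.le_iff_le hτ₀ ht).mp hy
      obtain ⟨k1, k2⟩ := key1 hτt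
      rw [abs_of_nonneg (by linarith : (0:ℝ) ≤ Q₂ t - Q₂ τ₀)]
      rw [abs_le]
      constructor <;> nlinarith
    · have hτt : t ≤ τ₀ := (hQ2mono.le_iff_le ht hτ₀).mp hy
      obtain ⟨k1, k2⟩ := key2 hτt
      rw [abs_of_nonpos (by linarith : Q₂ t - Q₂ τ₀ ≤ 0)]
      rw [abs_le]
      constructor <;> nlinarith
end

section
/- Let ζ, ζ† : [0,1] → [0,1] be diffeomorphisms (differentiable strictly increasing bijections with positive derivatives), let q₀(·|x) be a strictly positive quantile density for each x, and define Q_Y(τ|x) = γ₀ + xᵀγ + σ Q₀(ζ(τ)|x) and Q_Y†(τ|x) = γ₀ + xᵀγ + σ Q₀(ζ†(τ)|x), where Q₀(·|x) is an antiderivative of q₀(·|x). Then for every y in the common support, f_Y(y|x)/f_Y†(y|x) = ζ†'(F_Y†(y|x))/ζ'(F_Y(y|x)), where F_Y, F_Y† are the inverses of Q_Y, Q_Y† and f_Y(y|x) = 1/Q_Y'(F_Y(y|x)|x), f_Y†(y|x) = 1/Q_Y†'(F_Y†(y|x)|x). -/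
open scoped RealInnerProductSpace
open Set


private lemma mono_of_deriv (f f' : ℝ → ℝ)
    (h : ∀ τ ∈ Ioo (0:ℝ) 1, HasDerivAt f (f' τ) τ ∧ 0 < f' τ) :
    StrictMonoOn f (Ioo (0:ℝ) 1) := by
  apply StrictMonoOn.mono (s := Ioo 0 1) ?_ (le_refl _)
  apply strictMonoOn_of_deriv_pos (convex_Ioo 0 1)
  · exact fun t ht => (h t ht).1.continuousAt.continuousWithinAt
  · intro t ht
    rw [interior_Ioo] at ht
    rw [(h t ht).1.deriv]
    exact (h t ht).2

private lemma maps_Ioo (f f' : ℝ → ℝ)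
    (h : ∀ τ ∈ Ioo (0:ℝ) 1, HasDerivAt f (f' τ) τ ∧ 0 < f' τ)
    (hbij : BijOn f (Icc (0:ℝ) 1) (Icc (0:ℝ) 1)) :
    ∀ τ ∈ Ioo (0:ℝ) 1, f τ ∈ Ioo (0:ℝ) 1 := by
  have hmono := mono_of_deriv f f' h
  intro τ hτ
  obtain ⟨h0, h1⟩ := hτ
  have hmem : f τ ∈ Icc (0:ℝ) 1 := hbij.mapsTo ⟨h0.le, h1.le⟩
  constructor
  · rcases lt_or_eq_of_le hmem.1 with h | h
    · exact h
    · exfalso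
      have ht2 : τ/2 ∈ Ioo (0:ℝ) 1 := ⟨by linarith, by linarith⟩
      have := hmono ht2 ⟨h0, h1⟩ (by linarith)
      have hge : (0:ℝ) ≤ f (τ/2) := (hbij.mapsTo ⟨ht2.1.le, ht2.2.le⟩).1
      linarith
  · rcases lt_or_eq_of_le hmem.2 with h | h
    · exact h
    · exfalso
      have ht2 : (τ+1)/2 ∈ Ioo (0:ℝ) 1 := ⟨by linarith, by linarith⟩
      have := hmono ⟨h0, h1⟩ ht2 (by linarith)
      have hle : f ((τ+1)/2) ≤ 1 := (hbij.mapsTo ⟨ht2.1.le, ht2.2.le⟩).2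
      linarith

theorem stmt16 {p : ℕ} (x : EuclideanSpace ℝ (Fin p))
    (γ₀ : ℝ) (γ : EuclideanSpace ℝ (Fin p)) (σ : ℝ) (hσ : 0 < σ)
    (ζ ζ' ζd ζd' : ℝ → ℝ)
    (hζ : ∀ τ ∈ Ioo (0:ℝ) 1, HasDerivAt ζ (ζ' τ) τ ∧ 0 < ζ' τ)
    (hζd : ∀ τ ∈ Ioo (0:ℝ) 1, HasDerivAt ζd (ζd' τ) τ ∧ 0 < ζd' τ)
    (hζbij : BijOn ζ (Icc (0:ℝ) 1) (Icc (0:ℝ) 1))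
    (hζdbij : BijOn ζd (Icc (0:ℝ) 1) (Icc (0:ℝ) 1))
    (Q₀x q₀x : ℝ → ℝ)
    (hQ₀x : ∀ u ∈ Ioo (0:ℝ) 1, HasDerivAt Q₀x (q₀x u) u ∧ 0 < q₀x u)
    (QY QYd FY FYd fY fYd : ℝ → ℝ)
    (hQY : ∀ τ, QY τ = γ₀ + ⟪x, γ⟫ + σ * Q₀x (ζ τ))
    (hQYd : ∀ τ, QYd τ = γ₀ + ⟪x, γ⟫ + σ * Q₀x (ζd τ))
    (hFY : ∀ τ ∈ Ioo (0:ℝ) 1, FY (QY τ) = τ)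
    (hFYd : ∀ τ ∈ Ioo (0:ℝ) 1, FYd (QYd τ) = τ)
    (hFYmem : ∀ y ∈ QY '' Ioo (0:ℝ) 1, FY y ∈ Ioo (0:ℝ) 1 ∧ QY (FY y) = y)
    (hFYdmem : ∀ y ∈ QYd '' Ioo (0:ℝ) 1, FYd y ∈ Ioo (0:ℝ) 1 ∧ QYd (FYd y) = y)
    (hfY : ∀ y ∈ QY '' Ioo (0:ℝ) 1, fY y = 1 / (σ * q₀x (ζ (FY y)) * ζ' (FY y)))
    (hfYd : ∀ y ∈ QYd '' Ioo (0:ℝ) 1, fYd y = 1 / (σ * q₀x (ζd (FYd y)) * ζd' (FYd y))) :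
    ∀ y ∈ (QY '' Ioo (0:ℝ) 1) ∩ (QYd '' Ioo (0:ℝ) 1),
      fY y / fYd y = ζd' (FYd y) / ζ' (FY y) := by
  intro y hy
  obtain ⟨hy1, hy2⟩ := hy
  obtain ⟨hFYm, hQYF⟩ := hFYmem y hy1
  obtain ⟨hFYdm, hQYdF⟩ := hFYdmem y hy2
  have ha : ζ (FY y) ∈ Ioo (0:ℝ) 1 := maps_Ioo ζ ζ' hζ hζbij _ hFYm
  have hb : ζd (FYd y) ∈ Ioo (0:ℝ) 1 := maps_Ioo ζd ζd' hζd hζdbij _ hFYdm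
  have heq : Q₀x (ζ (FY y)) = Q₀x (ζd (FYd y)) := by
    have h1 := hQY (FY y)
    have h2 := hQYd (FYd y)
    rw [hQYF] at h1
    rw [hQYdF] at h2
    have : σ * Q₀x (ζ (FY y)) = σ * Q₀x (ζd (FYd y)) := by linarith
    exact mul_left_cancel₀ hσ.ne' this
  have hab : ζ (FY y) = ζd (FYd y) :=
    (mono_of_deriv Q₀x q₀x hQ₀x).injOn ha hb heq
  have hq : 0 < q₀x (ζ (FY y)) := (hQ₀x _ ha).2
  have hz1 : 0 < ζ' (FY y) := (hζ _ hFYm).2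
  have hz2 : 0 < ζd' (FYd y) := (hζd _ hFYdm).2
  rw [hfY y hy1, hfYd y hy2, ← hab]
  field_simp
end
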